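/- Let K be a field, n a positive integer, A ∈ Mₙ(K), and set T := fromBlocks 0 A (−A^⋆) 0, a 2n×2n matrix. If T is regular (its minimal polynomial equals its characteristic polynomial), then both of the n×n matrices A·A^⋆ and A^⋆·A are regular. -/

import Mathlib

open Polynomial Matrix

/-- The `n × n` antidiagonal permutation matrix `J`: with 1-based indexing,
`J i j = 1` if `i + j = n + 1` and `0` otherwise. -/
def antidiagJ (R : Type*) [CommRing R] (n : ℕ) : Matrix (Fin n) (Fin n) R :=
  Matrix.of fun i j => if (i : ℕ) + (j : ℕ) + 2 = n + 1 then 1 else 0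

/-- The reflection `M^⋆ = J * Mᵀ * J` of a square matrix about its antidiagonal. -/
def astar {R : Type*} [CommRing R] {n : ℕ} (M : Matrix (Fin n) (Fin n) R) :
    Matrix (Fin n) (Fin n) R :=
  antidiagJ R n * Mᵀ * antidiagJ R n

/-!
With `T = fromBlocks 0 A (-C) 0` we have `-T² = fromBlocks (A C) 0 0 (C A)`. If `p` is the
minimal polynomial of `A C` (or of `C A`), then `A p(C A) = p(A C) A = 0` and `C p(A C) = 0`, so
`X · p(-X²)` annihilates `T`. If `T` is regular, its minimal polynomial has degree `2n`, whence
`2n ≤ 2 deg p + 1`, i.e. `deg p ≥ n`, and `p` is the characteristic polynomial.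
-/

theorem SemiconjBy.aeval {R A : Type*} [CommSemiring R] [Semiring A] [Algebra R A] {a x y : A}
    (h : SemiconjBy a x y) (p : R[X]) : SemiconjBy a (aeval x p) (aeval y p) := by
  induction p using Polynomial.induction_on' with
  | add p q hp hq => simpa only [map_add] using hp.add_right hq
  | monomial k c =>
    simp only [aeval_monomial]
    exact SemiconjBy.mul_right (Algebra.commute_algebraMap_right c a) (h.pow_right k)

theorem Polynomial.natDegree_X_mul_comp_neg_X_sq {K : Type*} [Field K] {p : K[X]} (hp : p ≠ 0) :
    (X * p.comp (-X ^ 2)).natDegree = 2 * p.natDegree + 1 := by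
  have h2 : (-X ^ 2 : K[X]).natDegree = 2 := by simp
  have hne : p.comp (-X ^ 2) ≠ 0 := by
    rw [Ne, comp_eq_zero_iff, not_or, not_and_or]
    exact ⟨hp, .inr fun h => by simpa [h2] using congrArg natDegree h⟩
  rw [natDegree_mul X_ne_zero hne, natDegree_comp, h2, natDegree_X]
  ring

namespace Matrix

section

variable {R : Type*} [CommRing R] {m n : Type*} [Fintype m] [Fintype n] [DecidableEq m]
  [DecidableEq n]

theorem aeval_fromBlocks_zero_zero (P : Matrix m m R) (Q : Matrix n n R) (p : R[X]) :
    aeval (fromBlocks P 0 0 Q) p = fromBlocks (aeval P p) 0 0 (aeval Q p) := by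
  induction p using Polynomial.induction_on' with
  | add p q hp hq => simp only [map_add, hp, hq, fromBlocks_add, add_zero]
  | monomial k c =>
    simp only [aeval_monomial, fromBlocks_diagonal_pow, Algebra.algebraMap_eq_smul_one,
      smul_mul_assoc, one_mul, fromBlocks_smul, smul_zero]

theorem aeval_fromBlocks_X_mul_comp_neg_X_sq (A C : Matrix n n R) (p : R[X]) :
    aeval (fromBlocks 0 A (-C) 0) (X * p.comp (-X ^ 2)) =
      fromBlocks 0 (A * aeval (C * A) p) (-(C * aeval (A * C) p)) 0 := by
  have hsq : aeval (fromBlocks 0 A (-C) 0) (-X ^ 2 : R[X]) = fromBlocks (A * C) 0 0 (C * A) := by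
    simp [sq, fromBlocks_multiply, fromBlocks_neg]
  rw [map_mul, aeval_X, aeval_comp, hsq, aeval_fromBlocks_zero_zero, fromBlocks_multiply]
  simp

end

theorem minpoly_eq_charpoly_of_card_le_natDegree {K : Type*} [Field K] {n : Type*} [Fintype n]
    [DecidableEq n] {M : Matrix n n K} (h : Fintype.card n ≤ (minpoly K M).natDegree) :
    minpoly K M = M.charpoly :=
  (eq_of_monic_of_dvd_of_natDegree_le (minpoly.monic M.isIntegral) M.charpoly_monic
    M.minpoly_dvd_charpoly (by rwa [charpoly_natDegree_eq_dim])).symm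

variable {K : Type*} [Field K] {n : Type*} [Fintype n] [DecidableEq n] {A C : Matrix n n K}

theorem card_le_natDegree_of_minpoly_fromBlocks_eq_charpoly
    (hT : minpoly K (fromBlocks 0 A (-C) 0) = (fromBlocks 0 A (-C) 0).charpoly) {p : K[X]}
    (hp : p ≠ 0) (hA : A * aeval (C * A) p = 0) (hC : C * aeval (A * C) p = 0) :
    Fintype.card n ≤ p.natDegree := by
  have hann : aeval (fromBlocks 0 A (-C) 0) (X * p.comp (-X ^ 2)) = 0 := by
    rw [aeval_fromBlocks_X_mul_comp_neg_X_sq, hA, hC, neg_zero, fromBlocks_zero]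
  have hdeg := natDegree_X_mul_comp_neg_X_sq hp
  have hle := natDegree_le_of_dvd (minpoly.dvd K _ hann)
    (ne_zero_of_natDegree_gt (n := 0) (by omega))
  rw [hT, charpoly_natDegree_eq_dim, Fintype.card_sum, hdeg] at hle
  omega

theorem minpoly_mul_eq_charpoly_of_minpoly_fromBlocks_eq_charpoly
    (hT : minpoly K (fromBlocks 0 A (-C) 0) = (fromBlocks 0 A (-C) 0).charpoly) :
    minpoly K (A * C) = (A * C).charpoly ∧ minpoly K (C * A) = (C * A).charpoly := by
  have hAC : SemiconjBy A (C * A) (A * C) := (mul_assoc A C A).symm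
  have hCA : SemiconjBy C (A * C) (C * A) := (mul_assoc C A C).symm
  constructor <;> refine minpoly_eq_charpoly_of_card_le_natDegree
    (card_le_natDegree_of_minpoly_fromBlocks_eq_charpoly hT (minpoly.ne_zero (isIntegral _)) ?_ ?_)
  · rw [(hAC.aeval _).eq, minpoly.aeval, zero_mul]
  · rw [minpoly.aeval, mul_zero]
  · rw [minpoly.aeval, mul_zero]
  · rw [(hCA.aeval _).eq, minpoly.aeval, zero_mul]

end Matrix

theorem regular_of_fromBlocks_regular_general (K : Type*) [Field K] (n : ℕ)
    (A : Matrix (Fin n) (Fin n) K)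
    (hT : minpoly K (Matrix.fromBlocks 0 A (-(astar A)) 0) =
      (Matrix.fromBlocks 0 A (-(astar A)) 0).charpoly) :
    minpoly K (A * astar A) = (A * astar A).charpoly ∧
    minpoly K (astar A * A) = (astar A * A).charpoly :=
  Matrix.minpoly_mul_eq_charpoly_of_minpoly_fromBlocks_eq_charpoly hT

/-- If `T = fromBlocks 0 A (−A^⋆) 0` is regular (its minimal polynomial equals its
characteristic polynomial), then both `A·A^⋆` and `A^⋆·A` are regular. -/
theorem regular_of_fromBlocks_regular (K : Type*) [Field K] (n : ℕ) (hn : 0 < n)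
    (A : Matrix (Fin n) (Fin n) K)
    (hT : minpoly K (Matrix.fromBlocks 0 A (-(astar A)) 0) =
      (Matrix.fromBlocks 0 A (-(astar A)) 0).charpoly) :
    minpoly K (A * astar A) = (A * astar A).charpoly ∧
    minpoly K (astar A * A) = (astar A * A).charpoly :=
  regular_of_fromBlocks_regular_general K n A hT
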